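/- arXiv:0909.4445 — 3 statements merged into one kernel-verified Lean document; each statement's English description precedes it below -/
import Mathlib

section
/- Let n be a positive integer and let P(x,y) be a real polynomial in two variables which is not identically zero and has total degree at most n. Let a be a positive integer, let ε > 0, and let r be a positive real number. Assume that there exists M such that P(x,y) = 0 for all integers x, y with x ≥ M, y ≥ M and 0 < a·y − r·x < ε. Then r is a rational number, and when r is written in lowest terms as r = u/v with v a positive integer and gcd(u,v) = 1, one has v ≤ a(n+1)/ε. -/
/-!
Write `ℓ(x, y) = a y - r x`. If `r` is irrational (Dirichlet approximation), or `r = u / v` in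
lowest terms with `v > a (n + 1) / ε` (Bézout: `ℓ(w₁) = a / v`, `ℓ(w₂) = 0`), there are linearly
independent integer vectors `w₁, w₂` with `ℓ(w₁) > 0`, `ℓ(w₂) ≥ 0` and
`(n + 1) ℓ(w₁) + n ℓ(w₂) < ε`. Starting from a far-out integer point `b` with `0 < ℓ(b) ≤ ℓ(w₁)`,
the grid `b + i w₁ + j w₂`, `0 ≤ i, j ≤ n`, lies in the region where `P` vanishes. Then
`P(b + s w₁ + t w₂)` has degree at most `n` in each of `s, t` and vanishes on `{0, …, n}²`, so it is
zero by the combinatorial Nullstellensatz, and hence `P = 0`.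
-/

namespace MvPolynomial

variable {σ τ R : Type*} [CommSemiring R]

theorem totalDegree_aeval_le_of_totalDegree_le_one {g : σ → MvPolynomial τ R}
    (hg : ∀ i, (g i).totalDegree ≤ 1) (P : MvPolynomial σ R) :
    (aeval g P).totalDegree ≤ P.totalDegree := by
  conv_lhs => rw [P.as_sum, map_sum]
  refine totalDegree_finsetSum_le fun d hd => ?_
  rw [aeval_monomial, ← C_eq_algebraMap]
  calc _ ≤ (d.prod fun i k => g i ^ k).totalDegree :=
        (totalDegree_mul _ _).trans (by simp)
    _ ≤ ∑ i ∈ d.support, (g i ^ d i).totalDegree := totalDegree_finsetProd _ _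
    _ ≤ ∑ i ∈ d.support, d i := Finset.sum_le_sum fun i _ =>
        (totalDegree_pow _ _).trans (by simpa using Nat.mul_le_mul_left (d i) (hg i))
    _ ≤ P.totalDegree := le_totalDegree hd

variable {K : Type*} [Field K]

noncomputable def affineSubst (b v w : Fin 2 → K) : Fin 2 → MvPolynomial (Fin 2) K :=
  fun k => C (b k) + X 0 * C (v k) + X 1 * C (w k)

theorem totalDegree_affineSubst_le (b v w : Fin 2 → K) (k : Fin 2) :
    (affineSubst b v w k).totalDegree ≤ 1 := by
  have hlin (c : K) (i : Fin 2) : (X i * C c).totalDegree ≤ 1 :=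
    (totalDegree_mul _ _).trans (by simp)
  exact (totalDegree_add _ _).trans
    (max_le ((totalDegree_add _ _).trans (max_le (by simp) (hlin _ _))) (hlin _ _))

theorem eval_aeval_affineSubst (b v w s : Fin 2 → K) (P : MvPolynomial (Fin 2) K) :
    eval s (aeval (affineSubst b v w) P) = eval (b + s 0 • v + s 1 • w) P := by
  rw [← aeval_eq_eval, comp_aeval_apply, aeval_eq_eval]
  congr 2
  funext k
  simp [affineSubst, mul_comm]

theorem eq_zero_of_eval_eq_zero_on_affine_grid [CharZero K] {n : ℕ} {P : MvPolynomial (Fin 2) K}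
    (hP : P.totalDegree ≤ n) (b v w : Fin 2 → K) (hvw : v 0 * w 1 - v 1 * w 0 ≠ 0)
    (hgrid : ∀ i j : ℕ, i ≤ n → j ≤ n → eval (b + (i : K) • v + (j : K) • w) P = 0) :
    P = 0 := by
  have hQ : aeval (affineSubst b v w) P = 0 := by
    refine eq_zero_of_eval_zero_at_prod_finset _
      (fun _ => (Finset.range (n + 1)).map Nat.castEmbedding) (fun k => ?_) (fun s hs => ?_)
    · rw [Finset.card_map, Finset.card_range, Nat.lt_succ_iff]
      exact (degreeOf_le_totalDegree _ _).trans
        ((totalDegree_aeval_le_of_totalDegree_le_one (totalDegree_affineSubst_le b v w) P).trans hP)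
    · obtain ⟨i, hi, hsi⟩ := Finset.mem_map.mp (hs 0)
      obtain ⟨j, hj, hsj⟩ := Finset.mem_map.mp (hs 1)
      rw [eval_aeval_affineSubst, ← hsi, ← hsj]
      exact hgrid i j (Nat.lt_succ_iff.mp (Finset.mem_range.mp hi))
        (Nat.lt_succ_iff.mp (Finset.mem_range.mp hj))
  refine funext fun x => ?_
  obtain ⟨s, rfl⟩ : ∃ s : Fin 2 → K, b + s 0 • v + s 1 • w = x := by
    set D := v 0 * w 1 - v 1 * w 0
    refine ⟨![((x 0 - b 0) * w 1 - (x 1 - b 1) * w 0) / D,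
      (v 0 * (x 1 - b 1) - v 1 * (x 0 - b 0)) / D], ?_⟩
    funext k
    fin_cases k <;> simp <;> field_simp <;> ring
  rw [← eval_aeval_affineSubst, hQ, map_zero, map_zero]

end MvPolynomial

open MvPolynomial

theorem mul_le_mul_abs_of_abs_le {k K : ℝ} (hk : |k| ≤ K) (q : ℝ) : k * q ≤ K * |q| :=
  (le_abs_self _).trans ((abs_mul k q).trans_le (mul_le_mul_of_nonneg_right hk (abs_nonneg q)))

section Strip

variable {a r : ℝ}

theorem exists_int_point_in_strip (ha : 0 < a) (hr : 0 < r) {q p : ℤ}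
    (hδ : 0 < a * p - r * q) (Bx By : ℝ) :
    ∃ x y : ℤ, Bx ≤ x ∧ By ≤ y ∧ 0 < a * y - r * x ∧ a * y - r * x ≤ a * p - r * q := by
  set δ := a * p - r * q
  set K := a / δ + 1
  obtain ⟨x₀, hx₀⟩ : ∃ x : ℤ, max (Bx + K * |(q : ℝ)|) (a * (By + K * |(p : ℝ)|) / r) ≤ x :=
    ⟨_, Int.le_ceil _⟩
  rw [max_le_iff, div_le_iff₀ hr] at hx₀
  set y₀ := ⌈r * x₀ / a⌉
  have hy₀ : r * x₀ ≤ a * y₀ := by rw [← div_le_iff₀' ha]; exact Int.le_ceil _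
  have hy₀' : a * y₀ < r * x₀ + a := by
    rw [← lt_div_iff₀' ha, add_div, div_self ha.ne']; exact Int.ceil_lt_add_one _
  have hBy : By + K * |(p : ℝ)| ≤ y₀ := le_of_mul_le_mul_left (by linarith) ha
  -- `(x₀, y₀)` lies in `0 ≤ a y - r x < a`; a translate by `-k • (q, p)` lies in `0 < a y - r x ≤ δ`
  obtain ⟨k, ⟨hk₀, hk₁⟩, -⟩ := existsUnique_sub_zsmul_mem_Ioc hδ (a * y₀ - r * x₀) 0
  rw [zsmul_eq_mul] at hk₀ hk₁
  rw [zero_add] at hk₁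
  have hkK : |(k : ℝ)| ≤ K := by
    have hk_lt : (k : ℝ) < a / δ := by rw [lt_div_iff₀ hδ]; linarith
    have hk_ge : (-1 : ℝ) ≤ k := le_of_mul_le_mul_right (by linarith) hδ
    rw [abs_le]; constructor <;> linarith [div_pos ha hδ]
  refine ⟨x₀ - k * q, y₀ - k * p, ?_, ?_, ?_, ?_⟩ <;> push_cast
  · linarith [mul_le_mul_abs_of_abs_le hkK q]
  · linarith [mul_le_mul_abs_of_abs_le hkK p]
  all_goals linarith

theorem eq_zero_of_eval_eq_zero_on_strip {n : ℕ} {P : MvPolynomial (Fin 2) ℝ}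
    (hP : P.totalDegree ≤ n) (ha : 0 < a) (hr : 0 < r) {ε M : ℝ}
    (hvan : ∀ x y : ℤ, M ≤ x → M ≤ y → 0 < a * y - r * x → a * y - r * x < ε →
      eval ![(x : ℝ), y] P = 0)
    {q₁ p₁ q₂ p₂ : ℤ} (hdet : q₁ * p₂ - p₁ * q₂ ≠ 0) (h₁ : 0 < a * p₁ - r * q₁)
    (h₂ : 0 ≤ a * p₂ - r * q₂) (hsum : (n + 1) * (a * p₁ - r * q₁) + n * (a * p₂ - r * q₂) < ε) :
    P = 0 := by
  obtain ⟨x₀, y₀, hx₀, hy₀, hb₀, hb₁⟩ := exists_int_point_in_strip ha hr h₁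
    (M + n * (|(q₁ : ℝ)| + |(q₂ : ℝ)|)) (M + n * (|(p₁ : ℝ)| + |(p₂ : ℝ)|))
  refine eq_zero_of_eval_eq_zero_on_affine_grid hP ![x₀, y₀] ![q₁, p₁] ![q₂, p₂]
    (by simpa using (Int.cast_ne_zero (α := ℝ)).mpr hdet) fun i j hi hj => ?_
  have hi' : |-(i : ℝ)| ≤ n := by simpa using hi
  have hj' : |-(j : ℝ)| ≤ n := by simpa using hj
  have hℓ : a * (y₀ + i * p₁ + j * p₂) - r * (x₀ + i * q₁ + j * q₂) =
      (a * y₀ - r * x₀) + i * (a * p₁ - r * q₁) + j * (a * p₂ - r * q₂) := by ring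
  have hi₁ : (i : ℝ) * (a * p₁ - r * q₁) ≤ n * (a * p₁ - r * q₁) :=
    mul_le_mul_of_nonneg_right (by exact_mod_cast hi) h₁.le
  have hj₂ : (j : ℝ) * (a * p₂ - r * q₂) ≤ n * (a * p₂ - r * q₂) :=
    mul_le_mul_of_nonneg_right (by exact_mod_cast hj) h₂
  have hpt : (![(x₀ : ℝ), y₀] + (i : ℝ) • ![(q₁ : ℝ), p₁] + (j : ℝ) • ![(q₂ : ℝ), p₂]) =
      ![((x₀ + i * q₁ + j * q₂ : ℤ) : ℝ), ((y₀ + i * p₁ + j * p₂ : ℤ) : ℝ)] := by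
    funext k; fin_cases k <;> simp
  rw [hpt]
  apply hvan <;> push_cast
  · linarith [mul_le_mul_abs_of_abs_le hi' q₁, mul_le_mul_abs_of_abs_le hj' q₂]
  · linarith [mul_le_mul_abs_of_abs_le hi' p₁, mul_le_mul_abs_of_abs_le hj' p₂]
  · rw [hℓ]; positivity
  · rw [hℓ]; linarith

theorem exists_int_strip_lt_of_irrational (ha : 0 < a) (hr : Irrational (r / a)) {η : ℝ}
    (hη : 0 < η) : ∃ q p : ℤ, q ≠ 0 ∧ 0 < a * p - r * q ∧ a * p - r * q < η := by
  obtain ⟨N, hN⟩ := exists_nat_gt (a / η)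
  have hN₀ : 0 < N := by exact_mod_cast (div_pos ha hη).trans hN
  obtain ⟨j, k, hk₀, -, hjk⟩ := Real.exists_int_int_abs_mul_sub_le (r / a) hN₀
  have hℓ : a * j - r * k = -a * (k * (r / a) - j) := by field_simp; ring
  have hℓ₀ : a * j - r * k ≠ 0 := by
    rw [hℓ]
    exact mul_ne_zero (neg_ne_zero.mpr ha.ne') ((hr.intCast_mul hk₀.ne').sub_intCast j).ne_zero
  have hℓη : |a * j - r * k| < η := by
    rw [hℓ, abs_mul, abs_neg, abs_of_pos ha]
    calc a * |k * (r / a) - j| ≤ a * (1 / (N + 1)) := by gcongr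
      _ < η := by
        rw [div_lt_iff₀ hη] at hN
        rw [mul_one_div, div_lt_iff₀ (by positivity)]
        linarith
  rcases hℓ₀.lt_or_gt with hneg | hpos
  · refine ⟨-k, -j, neg_ne_zero.mpr hk₀.ne', ?_, ?_⟩ <;> push_cast
    · linarith
    · linarith [neg_abs_le (a * j - r * k)]
  · exact ⟨k, j, hk₀.ne', hpos, (le_abs_self _).trans_lt hℓη⟩

theorem exists_indep_strip_pair_of_irrational (ha : 0 < a) (hr : Irrational (r / a)) {η : ℝ}
    (hη : 0 < η) : ∃ q₁ p₁ q₂ p₂ : ℤ, q₁ * p₂ - p₁ * q₂ ≠ 0 ∧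
      0 < a * p₁ - r * q₁ ∧ a * p₁ - r * q₁ < η ∧ 0 < a * p₂ - r * q₂ ∧ a * p₂ - r * q₂ < η := by
  obtain ⟨q₁, p₁, -, h₁, h₁η⟩ := exists_int_strip_lt_of_irrational ha hr hη
  set ℓ₁ := a * p₁ - r * q₁
  obtain ⟨q₂, p₂, hq₂, h₂, h₂η⟩ := exists_int_strip_lt_of_irrational ha hr
    (lt_min hη (div_pos h₁ (by positivity : (0 : ℝ) < |(q₁ : ℝ)| + 1)))
  set ℓ₂ := a * p₂ - r * q₂
  rw [lt_min_iff, lt_div_iff₀ (by positivity)] at h₂η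
  refine ⟨q₁, p₁, q₂, p₂, fun hdet => ?_, h₁, h₁η, h₂, h₂η.1⟩
  have hpar : ℓ₁ * q₂ = ℓ₂ * q₁ := by
    have : ((q₁ * p₂ - p₁ * q₂ : ℤ) : ℝ) = 0 := by exact_mod_cast hdet
    push_cast at this
    linear_combination (-a) * this
  have hq₂' : (1 : ℝ) ≤ |(q₂ : ℝ)| := by exact_mod_cast Int.one_le_abs hq₂
  have := congrArg abs hpar
  rw [abs_mul, abs_mul, abs_of_pos h₁, abs_of_pos h₂] at this
  -- parallel directions: `ℓ₁ |q₂| = ℓ₂ |q₁| < ℓ₁`, although `|q₂| ≥ 1`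
  nlinarith

end Strip

theorem exists_indep_strip_pair_of_coprime {a u : ℤ} {v : ℕ} (ha : a ≠ 0) (hv : 0 < v)
    (huv : IsCoprime u v) : ∃ q₁ p₁ q₂ p₂ : ℤ, q₁ * p₂ - p₁ * q₂ ≠ 0 ∧
      a * p₁ - (u / v : ℝ) * q₁ = a / v ∧ a * p₂ - (u / v : ℝ) * q₂ = 0 := by
  obtain ⟨x, y, hxy⟩ := huv
  refine ⟨-a * x, y, a * v, u, ?_, ?_, ?_⟩
  · rw [show -a * x * u - y * (a * v) = -a * (x * u + y * v) by ring, hxy]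
    simpa using ha
  · have : (x : ℝ) * u + y * v = 1 := by exact_mod_cast hxy
    push_cast
    field_simp
    linear_combination this
  · push_cast
    field_simp
    ring

theorem rationality_lemma_general
    (n : ℕ) (P : MvPolynomial (Fin 2) ℝ) (hP : P ≠ 0)
    (hdeg : P.totalDegree ≤ n)
    (a : ℕ) (ha : 0 < a) (ε : ℝ) (hε : 0 < ε) (r : ℝ) (hr : 0 < r)
    (hvan : ∃ M : ℝ, ∀ x y : ℤ, M ≤ (x : ℝ) → M ≤ (y : ℝ) →
      0 < (a : ℝ) * (y : ℝ) - r * (x : ℝ) →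
      (a : ℝ) * (y : ℝ) - r * (x : ℝ) < ε →
      MvPolynomial.eval ![(x : ℝ), (y : ℝ)] P = 0) :
    ∃ (u : ℤ) (v : ℕ), 0 < v ∧ Nat.Coprime u.natAbs v ∧
      r = (u : ℝ) / (v : ℝ) ∧ (v : ℝ) ≤ (a : ℝ) * (n + 1) / ε := by
  obtain ⟨M, hvan⟩ := hvan
  have ha' : (0 : ℝ) < a := by exact_mod_cast ha
  by_cases hirr : Irrational r
  · obtain ⟨q₁, p₁, q₂, p₂, hdet, h₁, h₁ε, h₂, h₂ε⟩ :=
      exists_indep_strip_pair_of_irrational ha' (hirr.div_natCast ha.ne')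
        (div_pos hε (by positivity : (0 : ℝ) < 2 * n + 1))
    refine absurd (eq_zero_of_eval_eq_zero_on_strip hdeg ha' hr hvan hdet h₁ h₂.le ?_) hP
    rw [lt_div_iff₀ (by positivity)] at h₁ε h₂ε
    nlinarith
  · obtain ⟨q, rfl⟩ := not_not.mp hirr
    refine ⟨q.num, q.den, q.pos, q.reduced, Rat.cast_def q, ?_⟩
    by_contra! hden
    obtain ⟨q₁, p₁, q₂, p₂, hdet, h₁, h₂⟩ := exists_indep_strip_pair_of_coprime (a := a)
      (by exact_mod_cast ha.ne') q.pos (Int.isCoprime_iff_gcd_eq_one.mpr q.reduced)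
    rw [← Rat.cast_def, Int.cast_natCast] at h₁ h₂
    refine hP (eq_zero_of_eval_eq_zero_on_strip hdeg ha' hr hvan hdet (h₁ ▸ by positivity)
      h₂.ge ?_)
    rw [div_lt_iff₀ hε] at hden
    rw [h₁, h₂, mul_zero, add_zero, mul_div_assoc', div_lt_iff₀ (by positivity)]
    linarith

/-- **Rationality lemma** (Lemma 13.2, cf. Kollár–Mori Lemma 3.19).
If a non-trivial real polynomial `P` of total degree `≤ n` vanishes at all
sufficiently large integral points `(x, y)` with `0 < a·y − r·x < ε`, then
`r` is rational with denominator (in lowest terms) at most `a(n+1)/ε`. -/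
theorem rationality_lemma
    (n : ℕ) (hn : 0 < n) (P : MvPolynomial (Fin 2) ℝ) (hP : P ≠ 0)
    (hdeg : P.totalDegree ≤ n)
    (a : ℕ) (ha : 0 < a) (ε : ℝ) (hε : 0 < ε) (r : ℝ) (hr : 0 < r)
    (hvan : ∃ M : ℝ, ∀ x y : ℤ, M ≤ (x : ℝ) → M ≤ (y : ℝ) →
      0 < (a : ℝ) * (y : ℝ) - r * (x : ℝ) →
      (a : ℝ) * (y : ℝ) - r * (x : ℝ) < ε →
      MvPolynomial.eval ![(x : ℝ), (y : ℝ)] P = 0) :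
    ∃ (u : ℤ) (v : ℕ), 0 < v ∧ Nat.Coprime u.natAbs v ∧
      r = (u : ℝ) / (v : ℝ) ∧ (v : ℝ) ≤ (a : ℝ) * (n + 1) / ε :=
  rationality_lemma_general n P hP hdeg a ha ε hε r hr hvan
end

section
/- Let n be a nonnegative integer and let P(X,Y) be a real polynomial in two variables of total degree at most n. Let (x′, y′) be a pair of real numbers with (x′, y′) ≠ (0, 0), and assume that P(k·x′, k·y′) = 0 for every integer k with 1 ≤ k ≤ n + 1. Then the linear polynomial y′·X − x′·Y divides P in the polynomial ring ℝ[X,Y]. -/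
/-!
Restricted to the line `t ↦ t • (x', y')`, `P` becomes a one-variable polynomial of degree at
most `n` with the `n + 1` roots `1, …, n + 1`, so it vanishes identically, i.e. `P` vanishes on the
whole line. If `y' ≠ 0`, view `P` as a polynomial in `X₀` over `ℝ[X₁]`: vanishing on the line
says that `(x' / y') X₁` is a root, so `X₀ - (x' / y') X₁` divides `P`. The case `x' ≠ 0` follows
by exchanging the variables.
-/

open MvPolynomial

section Restriction

variable {R σ : Type*} [CommRing R]

noncomputable def restrictLine (P : MvPolynomial σ R) (v : σ → R) : Polynomial R :=
  aeval (fun i => Polynomial.C (v i) * Polynomial.X) P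

lemma eval_restrictLine (P : MvPolynomial σ R) (v : σ → R) (t : R) :
    (restrictLine P v).eval t = eval (t • v) P := by
  rw [restrictLine, ← Polynomial.coe_aeval_eq_eval, comp_aeval_apply, ← aeval_eq_eval]
  congr 2
  funext i
  rw [map_mul, Polynomial.aeval_C, Polynomial.aeval_X, Algebra.algebraMap_self_apply, mul_comm]
  rfl

lemma natDegree_restrictLine_le {P : MvPolynomial σ R} {n : ℕ} (hP : P.totalDegree ≤ n)
    (v : σ → R) : (restrictLine P v).natDegree ≤ n := by
  simpa [restrictLine] using aeval_natDegree_le P hP _ fun i =>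
    (Polynomial.natDegree_C_mul_le _ _).trans Polynomial.natDegree_X_le

lemma eval_smul_eq_zero_of_totalDegree_lt_card [IsDomain R] {P : MvPolynomial σ R} {v : σ → R}
    {ι : Type*} [Fintype ι] {f : ι → R} (hf : f.Injective)
    (hP : P.totalDegree < Fintype.card ι) (h : ∀ i, eval (f i • v) P = 0) (t : R) :
    eval (t • v) P = 0 := by
  have : restrictLine P v = 0 :=
    Polynomial.eq_zero_of_natDegree_lt_card_of_eval_eq_zero _ hf
      (fun i => (eval_restrictLine P v _).trans (h i))
      ((natDegree_restrictLine_le le_rfl v).trans_lt hP)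
  rw [← eval_restrictLine, this, Polynomial.eval_zero]

end Restriction

section Divisibility

variable {R : Type*} [CommRing R] {n : ℕ}

lemma finSuccEquiv_rename_succ (Q : MvPolynomial (Fin n) R) :
    finSuccEquiv R n (rename Fin.succ Q) = Polynomial.C Q := by
  have : (finSuccEquiv R n).toAlgHom.comp (rename Fin.succ) = Polynomial.CAlgHom :=
    algHom_ext fun i => by simp [finSuccEquiv_X_succ]
  exact DFunLike.congr_fun this Q

lemma X_zero_sub_rename_succ_dvd [IsDomain R] [Infinite R] {P : MvPolynomial (Fin (n + 1)) R}
    {Q : MvPolynomial (Fin n) R} (h : ∀ s : Fin n → R, eval (Fin.cons (eval s Q) s) P = 0) :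
    X 0 - rename Fin.succ Q ∣ P := by
  rw [← map_dvd_iff (finSuccEquiv R n), map_sub, finSuccEquiv_X_zero, finSuccEquiv_rename_succ,
    Polynomial.dvd_iff_isRoot]
  refine MvPolynomial.funext fun s => ?_
  rw [map_zero, ← Polynomial.eval₂_hom, ← Polynomial.eval_map, ← eval_eq_eval_mv_eval']
  exact h s

end Divisibility

section LinearForm

variable {K : Type*} [Field K] [Infinite K]

lemma linearForm_dvd_of_eval_smul_eq_zero_of_snd_ne_zero {P : MvPolynomial (Fin 2) K} {a b : K}
    (hb : b ≠ 0) (h : ∀ t : K, eval (t • ![a, b]) P = 0) : C b * X 0 - C a * X 1 ∣ P := by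
  have hdvd : X 0 - rename Fin.succ (C (a / b) * X 0) ∣ P :=
    X_zero_sub_rename_succ_dvd fun s => by
      have hpt : (Fin.cons (eval s (C (a / b) * X 0)) s : Fin 2 → K) = (s 0 / b) • ![a, b] := by
        ext i
        fin_cases i <;> simp <;> field_simp
      rw [hpt]
      exact h _
  have hform : (C b * X 0 - C a * X 1 : MvPolynomial (Fin 2) K) =
      C b * (X 0 - rename Fin.succ (C (a / b) * X 0)) := by
    rw [map_mul, rename_C, rename_X, Fin.succ_zero_eq_one, mul_sub, ← mul_assoc, ← C_mul,
      mul_div_cancel₀ _ hb]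
  rw [hform]
  exact ((isUnit_iff_ne_zero.mpr hb).map C).mul_left_dvd.mpr hdvd

lemma linearForm_dvd_of_eval_smul_eq_zero {P : MvPolynomial (Fin 2) K} {a b : K}
    (hab : (a, b) ≠ (0, 0)) (h : ∀ t : K, eval (t • ![a, b]) P = 0) :
    C b * X 0 - C a * X 1 ∣ P := by
  obtain hb | ha : b ≠ 0 ∨ a ≠ 0 := by
    contrapose! hab
    simp [hab]
  · exact linearForm_dvd_of_eval_smul_eq_zero_of_snd_ne_zero hb h
  · let swap := renameEquiv K (Equiv.swap (0 : Fin 2) 1)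
    rw [← map_dvd_iff swap, ← neg_dvd]
    convert linearForm_dvd_of_eval_smul_eq_zero_of_snd_ne_zero (a := b) ha fun t => ?_ using 1
    · simp [swap]
    · rw [renameEquiv_apply, eval_rename]
      convert h t using 3
      ext i
      fin_cases i <;> simp

end LinearForm

/-- A real polynomial of total degree `≤ n` in two variables vanishing at the `n+1`
points `(k·x′, k·y′)`, `k = 1, …, n+1`, on the line through the origin and
`(x′, y′) ≠ (0,0)` is divisible by the linear form `y′·X − x′·Y`. -/
theorem linear_form_dvd_of_vanishing
    (n : ℕ) (P : MvPolynomial (Fin 2) ℝ) (hdeg : P.totalDegree ≤ n)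
    (x' y' : ℝ) (hxy : (x', y') ≠ (0, 0))
    (hvan : ∀ k : ℤ, 1 ≤ k → k ≤ (n : ℤ) + 1 →
      MvPolynomial.eval ![(k : ℝ) * x', (k : ℝ) * y'] P = 0) :
    (C y' * X 0 - C x' * X 1) ∣ P := by
  have hline : ∀ t : ℝ, eval (t • ![x', y']) P = 0 :=
    eval_smul_eq_zero_of_totalDegree_lt_card (f := fun k : Fin (n + 1) => (k + 1 : ℝ))
      (fun i j hij => Fin.ext (by simpa using hij)) (by simpa using Nat.lt_succ_of_le hdeg)
      fun k => by simpa using hvan (k + 1) (by omega) (by omega)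
  exact linearForm_dvd_of_eval_smul_eq_zero hxy hline
end

section
/- Let X be a locally connected topological space, let Z ⊆ X be a closed subset, and let F be a sheaf of abelian groups on X. Let F₁ and F₂ be sheaves of abelian groups on X equipped with monomorphisms φ₁ : F₁ → F and φ₂ : F₂ → F. Assume: (1) for every open set U ⊆ X with U ∩ Z = ∅, the map φ₂(U) : F₂(U) → F(U) is surjective; and (2) for every connected open set U ⊆ X with U ∩ Z ≠ ∅, F₁(U) = 0. Then for every open set U ⊆ X, the image of φ₁(U) : F₁(U) → F(U) is contained in the image of φ₂(U) : F₂(U) → F(U); that is, φ₁ factors through φ₂ as a morphism of sheaves. -/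
/-!
Cover an open set `U` by its connected components, which are open because `X` is locally
connected. On a component disjoint from `Z` the monomorphism `φ₂` is an isomorphism on sections,
and on a component meeting `Z` the sections of `F₁` vanish; either way `φ₁` factors through `φ₂`
there. Since `φ₂` is a monomorphism these local factorizations are compatible, so they glue in the
sheaf `F₂`, and the glued morphism factors `φ₁(U)` because `F` is separated.
-/

open CategoryTheory Limits TopologicalSpace Opposite

theorem CategoryTheory.NatTrans.exists_comp_eq_of_forall_app {C D : Type*} [Category C]
    [Category D] {F G H : C ⥤ D} (α : F ⟶ H) (β : G ⟶ H) [∀ c, Mono (β.app c)]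
    (h : ∀ c, ∃ f, f ≫ β.app c = α.app c) : ∃ γ : F ⟶ G, γ ≫ β = α := by
  choose f hf using h
  refine ⟨{ app := f, naturality := fun c c' g => ?_ }, NatTrans.ext (funext hf)⟩
  rw [← cancel_mono (β.app c'), Category.assoc, Category.assoc, hf, β.naturality,
    reassoc_of% hf, α.naturality]

theorem TopCat.Sheaf.exists_comp_eq_of_ofArrows_mem {A : Type*} [Category A] {X : TopCat}
    {F G : TopCat.Sheaf A X} (φ : G ⟶ F) [∀ W, Mono (φ.hom.app W)] {U : Opens X} {ι : Type*}
    {V : ι → Opens X} (f : ∀ i, V i ⟶ U)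
    (hf : Sieve.ofArrows V f ∈ Opens.grothendieckTopology X U) {E : A}
    (a : E ⟶ F.obj.obj (op U))
    (h : ∀ i, ∃ b, b ≫ φ.hom.app (op (V i)) = a ≫ F.obj.map (f i).op) :
    ∃ b, b ≫ φ.hom.app (op U) = a := by
  choose b hb using h
  have compatible : ∀ ⦃W : Opens X⦄ ⦃i j : ι⦄ (p : W ⟶ V i) (q : W ⟶ V j),
      p ≫ f i = q ≫ f j → b i ≫ G.obj.map p.op = b j ≫ G.obj.map q.op := by
    intro W i j p q hpq
    rw [← cancel_mono (φ.hom.app (op W)), Category.assoc, Category.assoc, φ.hom.naturality,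
      φ.hom.naturality, reassoc_of% hb, reassoc_of% hb, ← F.obj.map_comp, ← F.obj.map_comp,
      ← op_comp, ← op_comp, hpq]
  obtain ⟨g, hg, -⟩ := G.property.existsUnique_amalgamation_ofArrows f hf b compatible
  refine ⟨g, F.property.hom_ext_ofArrows f hf fun i => ?_⟩
  rw [Category.assoc, ← φ.hom.naturality, reassoc_of% hg, hb]

def TopologicalSpace.Opens.connectedComponentIn {α : Type*} [TopologicalSpace α]
    [LocallyConnectedSpace α] (U : Opens α) (x : α) : Opens α :=
  ⟨_root_.connectedComponentIn U x, U.isOpen.connectedComponentIn⟩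

theorem TopologicalSpace.Opens.ofArrows_connectedComponentIn_mem {X : TopCat}
    [LocallyConnectedSpace X] (U : Opens X) :
    Sieve.ofArrows (fun x : U => U.connectedComponentIn x)
      (fun _ => homOfLE (connectedComponentIn_subset _ _)) ∈ Opens.grothendieckTopology X U :=
  fun x hx => ⟨_, _, Sieve.ofArrows_mk _ _ ⟨x, hx⟩, by exact mem_connectedComponentIn hx⟩

theorem subsheaf_of_subsheaf_of_vanishing_near_Z_general
    (X : TopCat) [LocallyConnectedSpace X]
    (Z : Set X)
    (F F₁ F₂ : TopCat.Sheaf AddCommGrpCat X)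
    (φ₁ : F₁ ⟶ F) (φ₂ : F₂ ⟶ F) (hφ₂ : Mono φ₂)
    (h2 : ∀ U : Opens X, (U : Set X) ∩ Z = ∅ →
      Function.Surjective (φ₂.hom.app (op U)))
    (h1 : ∀ U : Opens X, IsConnected (U : Set X) → ((U : Set X) ∩ Z).Nonempty →
      ∀ s : F₁.val.obj (op U), s = 0) :
    (∀ U : Opens X,
      Set.range (φ₁.hom.app (op U)) ⊆ Set.range (φ₂.hom.app (op U))) ∧
    ∃ ψ : F₁ ⟶ F₂, ψ ≫ φ₂ = φ₁ := by
  have : Mono φ₂.hom := @Functor.map_mono _ _ _ _ (sheafToPresheaf _ _) _ _ _ φ₂ hφ₂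
  have hlift : ∀ U : Opens X, ∃ b, b ≫ φ₂.hom.app (op U) = φ₁.hom.app (op U) := by
    intro U
    refine F.exists_comp_eq_of_ofArrows_mem φ₂ _ U.ofArrows_connectedComponentIn_mem _
      fun x => ?_
    by_cases hdisj : (U.connectedComponentIn x : Set X) ∩ Z = ∅
    · have : Epi (φ₂.hom.app _) := (AddCommGrpCat.epi_iff_surjective _).2 (h2 _ hdisj)
      have := isIso_of_mono_of_epi (φ₂.hom.app (op (U.connectedComponentIn x)))
      exact ⟨_ ≫ inv _, by rw [Category.assoc, IsIso.inv_hom_id, Category.comp_id]⟩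
    · have hvanish := h1 _ (isConnected_connectedComponentIn_iff.2 x.2)
        (Set.nonempty_iff_ne_empty.2 hdisj)
      have : Subsingleton (F₁.obj.obj (op (U.connectedComponentIn x))) :=
        ⟨fun s t => (hvanish s).trans (hvanish t).symm⟩
      refine ⟨0, ?_⟩
      rw [zero_comp, ← φ₁.hom.naturality,
        (AddCommGrpCat.isZero_of_subsingleton _).eq_of_tgt (F₁.obj.map _) 0, zero_comp]
  obtain ⟨ψ, hψ⟩ := NatTrans.exists_comp_eq_of_forall_app φ₁.hom φ₂.hom fun U => hlift U.unop
  refine ⟨fun U => ?_, ⟨ψ⟩, Sheaf.hom_ext hψ⟩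
  rintro _ ⟨s, rfl⟩
  obtain ⟨b, hb⟩ := hlift U
  exact ⟨b s, by rw [← hb, ConcreteCategory.comp_apply]⟩

/-- **Lemma 4.4** (cf. Kollár–Mori, Lemma 2.55). Let `X` be a locally connected
topological space, `Z ⊆ X` a closed subset and `F`, `F₁`, `F₂` sheaves of abelian
groups on `X` with monomorphisms `φ₁ : F₁ → F`, `φ₂ : F₂ → F`. If `φ₂` is surjective
on sections over every open set disjoint from `Z`, and `F₁(U) = 0` for every connected
open `U` meeting `Z`, then the image of `φ₁(U)` is contained in the image of `φ₂(U)`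
for every open `U`; that is, `φ₁` factors through `φ₂` as a morphism of sheaves. -/
theorem subsheaf_of_subsheaf_of_vanishing_near_Z
    (X : TopCat) [LocallyConnectedSpace X]
    (Z : Set X) (hZ : IsClosed Z)
    (F F₁ F₂ : TopCat.Sheaf AddCommGrpCat X)
    (φ₁ : F₁ ⟶ F) (φ₂ : F₂ ⟶ F) (hφ₁ : Mono φ₁) (hφ₂ : Mono φ₂)
    (h2 : ∀ U : Opens X, (U : Set X) ∩ Z = ∅ →
      Function.Surjective (φ₂.hom.app (op U)))
    (h1 : ∀ U : Opens X, IsConnected (U : Set X) → ((U : Set X) ∩ Z).Nonempty →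
      ∀ s : F₁.val.obj (op U), s = 0) :
    (∀ U : Opens X,
      Set.range (φ₁.hom.app (op U)) ⊆ Set.range (φ₂.hom.app (op U))) ∧
    ∃ ψ : F₁ ⟶ F₂, ψ ≫ φ₂ = φ₁ :=
  subsheaf_of_subsheaf_of_vanishing_near_Z_general X Z F F₁ F₂ φ₁ φ₂ hφ₂ h2 h1
end
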